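/- Assume the Generalized Continuum Hypothesis (2^λ = λ⁺ for every infinite cardinal λ). Let K be an infinite compact Hausdorff space. If w(K) is a limit cardinal, then the closed unit ball of C(K) contains a 2-equilateral set of cardinality w(K); and if w(K) = κ⁺ for an infinite cardinal κ, then the closed unit ball of C(K) contains a 2-equilateral set of cardinality κ. -/

import Mathlib

/-!
Fix a well-order of `K`. The points that are not in the closure of their predecessors form a
dense set `J`. Urysohn functions equal to `1` at `y ∈ J` and to `-1` on the closure of the
predecessors of `y` are pairwise at distance `2`, so every cardinal `≤ #J` is the size of a
`2`-equilateral set. On the other hand the regular open sets `interior (closure s)`, `s ⊆ J`, form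
a base, so `w(K) ≤ 2 ^ #J = #J⁺` by GCH.
-/

open Cardinal

/-- The weight of a topological space: the minimal infinite cardinality of a
base for its topology. -/
noncomputable def weight (X : Type u) [TopologicalSpace X] : Cardinal.{u} :=
  ⨅ B : {B : Set (Set X) // TopologicalSpace.IsTopologicalBasis B}, max #B.1 ℵ₀

open Set TopologicalSpace

section Topology

variable {X : Type u} [TopologicalSpace X]

theorem weight_le_max_mk {B : Set (Set X)} (hB : IsTopologicalBasis B) :
    weight X ≤ max #B ℵ₀ :=
  ciInf_le (OrderBot.bddBelow _) (⟨B, hB⟩ : {B : Set (Set X) // IsTopologicalBasis B})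

theorem Dense.isTopologicalBasis_interior_closure [RegularSpace X] {D : Set X} (hD : Dense D) :
    IsTopologicalBasis ((fun s => interior (closure s)) '' 𝒫 D) := by
  refine isTopologicalBasis_of_isOpen_of_nhds (by rintro _ ⟨s, -, rfl⟩; exact isOpen_interior) ?_
  intro a U haU hU
  obtain ⟨F, hFa, hFc, hFU⟩ := exists_mem_nhds_isClosed_subset (hU.mem_nhds haU)
  have hVD : interior F ⊆ closure (interior F ∩ D) := hD.open_subset_closure_inter isOpen_interior
  refine ⟨interior (closure (interior F ∩ D)), ⟨_, inter_subset_right, rfl⟩,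
    interior_maximal hVD isOpen_interior (mem_interior_iff_mem_nhds.2 hFa), ?_⟩
  calc interior (closure (interior F ∩ D)) ⊆ closure (interior F) :=
        interior_subset.trans (closure_mono inter_subset_left)
    _ ⊆ F := closure_minimal interior_subset hFc
    _ ⊆ U := hFU

theorem weight_le_max_two_pow_mk [RegularSpace X] {D : Set X} (hD : Dense D) :
    weight X ≤ max (2 ^ #D) ℵ₀ := by
  refine (weight_le_max_mk hD.isTopologicalBasis_interior_closure).trans (max_le_max ?_ le_rfl)
  exact mk_image_le.trans (mk_powerset D).le

theorem Dense.infinite [T1Space X] [Infinite X] {D : Set X} (hD : Dense D) : D.Infinite :=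
  fun hfin => infinite_univ (hD.closure_eq ▸ hfin.isClosed.closure_eq ▸ hfin)

theorem WellFounded.dense_setOf_notMem_closure {r : X → X → Prop} (hr : WellFounded r) :
    Dense {y | y ∉ closure {z | r z y}} := by
  intro y
  induction y using hr.induction with
  | _ y ih =>
    by_cases hy : y ∈ closure {z | r z y}
    · exact closure_minimal (fun z hz => ih z hz) isClosed_closure hy
    · exact subset_closure hy

end Topology

section Equilateral

variable {K : Type u} [TopologicalSpace K]

theorem exists_continuousMap_eq_one_eqOn_neg_one [NormalSpace K] [T1Space K] {x : K} {U : Set K}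
    (hU : IsOpen U) (hx : x ∈ U) :
    ∃ f : C(K, ℝ), f x = 1 ∧ EqOn f (-1) Uᶜ ∧ ∀ y, f y ∈ Icc (-1) 1 := by
  obtain ⟨f, hfU, hfx, hf⟩ := exists_bounded_mem_Icc_of_closed_of_le hU.isClosed_compl
    isClosed_singleton (disjoint_singleton_right.2 (not_not_intro hx)) (neg_one_lt_zero.trans
      zero_lt_one).le
  exact ⟨f, hfx rfl, hfU, hf⟩

variable [CompactSpace K]

theorem ContinuousMap.norm_sub_eq_two {f g : C(K, ℝ)} (hf : ‖f‖ ≤ 1) (hg : ‖g‖ ≤ 1) {x : K}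
    (hfx : f x = 1) (hgx : g x = -1) : ‖f - g‖ = 2 := by
  refine le_antisymm ((norm_sub_le f g).trans (by linarith)) ?_
  calc (2 : ℝ) = ‖(f - g) x‖ := by norm_num [hfx, hgx]
    _ ≤ ‖f - g‖ := (f - g).norm_coe_le_norm x

theorem exists_pairwise_norm_sub_eq_two_of_leftSeparated [NormalSpace K] [T1Space K] (r : K → K → Prop)
    [Std.Trichotomous r] (S : Set K) (hS : ∀ y ∈ S, y ∉ closure {z | r z y}) :
    ∃ A : Set C(K, ℝ), A ⊆ Metric.closedBall 0 1 ∧ #A = #S ∧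
      A.Pairwise fun f g => ‖f - g‖ = 2 := by
  choose f hfy hfpred hf using fun y : S =>
    exists_continuousMap_eq_one_eqOn_neg_one isClosed_closure.isOpen_compl (hS y y.2)
  have hf_norm (y : S) : ‖f y‖ ≤ 1 :=
    (ContinuousMap.norm_le _ zero_le_one).2 fun z => abs_le.2 (hf y z)
  have hf_lt {y y' : S} (h : r y y') : ‖f y - f y'‖ = 2 :=
    ContinuousMap.norm_sub_eq_two (hf_norm y) (hf_norm y') (hfy y)
      (hfpred y' (not_not_intro (subset_closure h)))
  have hf_ne {y y' : S} (h : y ≠ y') : ‖f y - f y'‖ = 2 := by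
    rcases trichotomous_of r y y' with h' | h' | h'
    · exact hf_lt h'
    · exact absurd (Subtype.ext h') h
    · rw [norm_sub_rev]; exact hf_lt h'
  have hf_inj : Function.Injective f := fun y y' h => by
    by_contra hne
    simpa [h] using hf_ne hne
  refine ⟨range f, ?_, mk_range_eq f hf_inj, ?_⟩
  · rintro _ ⟨y, rfl⟩
    simpa using hf_norm y
  · rintro _ ⟨y, rfl⟩ _ ⟨y', rfl⟩ hne
    exact hf_ne (ne_of_apply_ne f hne)

end Equilateral

/-- Under GCH: if `w(K)` is a limit cardinal then the closed unit ball of `C(K)` contains a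
`2`-equilateral set of cardinality `w(K)`, and if `w(K) = κ⁺` for an infinite cardinal
`κ` then it contains a `2`-equilateral set of cardinality `κ`. -/
theorem statement19 (gch : ∀ lam : Cardinal.{u}, ℵ₀ ≤ lam → 2 ^ lam = Order.succ lam)
    (K : Type u) [TopologicalSpace K] [CompactSpace K] [T2Space K] [Infinite K] :
    ((∀ μ : Cardinal.{u}, weight K ≠ Order.succ μ) →
      ∃ A : Set C(K, ℝ), A ⊆ Metric.closedBall 0 1 ∧ #A = weight K ∧
        ∀ f ∈ A, ∀ g ∈ A, f ≠ g → ‖f - g‖ = 2) ∧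
    (∀ κ : Cardinal.{u}, ℵ₀ ≤ κ → weight K = Order.succ κ →
      ∃ A : Set C(K, ℝ), A ⊆ Metric.closedBall 0 1 ∧ #A = κ ∧
        ∀ f ∈ A, ∀ g ∈ A, f ≠ g → ‖f - g‖ = 2) := by
  set J := {y : K | y ∉ closure {z | WellOrderingRel z y}}
  have hJ : Dense J := IsWellFounded.wf.dense_setOf_notMem_closure
  have hJ_inf : ℵ₀ ≤ #J := infinite_iff.1 hJ.infinite.to_subtype
  have hw : weight K ≤ Order.succ #J := by
    simpa [gch _ hJ_inf, hJ_inf.trans (Order.le_succ _)] using weight_le_max_two_pow_mk hJ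
  have hJ_equilateral (lam : Cardinal.{u}) (hlam : lam ≤ #J) :
      ∃ A : Set C(K, ℝ), A ⊆ Metric.closedBall 0 1 ∧ #A = lam ∧
        A.Pairwise fun f g => ‖f - g‖ = 2 := by
    obtain ⟨S, hSJ, rfl⟩ := le_mk_iff_exists_subset.1 hlam
    exact exists_pairwise_norm_sub_eq_two_of_leftSeparated WellOrderingRel S fun y hy => hSJ hy
  exact ⟨fun hlim => hJ_equilateral _ (Order.lt_succ_iff.1 (hw.lt_of_ne (hlim _))),
    fun κ _ hκ => hJ_equilateral κ (Order.succ_le_succ_iff.1 (hκ ▸ hw))⟩
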